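/- Let D be a nonnegative random variable bounded above by M > 0, with E[D] = δ ∈ (0, M). Then for all η ∈ (0, δ), P(D < η) ≤ (δ(M−δ) + 2ηδ)/(δ(M−δ) + δ²) = (M − δ + 2η)/M. -/

import Mathlib

/-!
Markov's inequality for the nonnegative variable `M - D` gives the reverse Markov bound
`P(D < η) ≤ (M - δ) / (M - η)`, which is already sharper than `(M - δ + 2η) / M`
because `2η ≤ M + δ`.
-/

open MeasureTheory ProbabilityTheory

theorem measureReal_lt_le_of_ae_le {Ω : Type*} [MeasurableSpace Ω] {μ : Measure Ω}
    [IsProbabilityMeasure μ] {X : Ω → ℝ} (hX : Integrable X μ) {M η : ℝ}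
    (hXM : ∀ᵐ ω ∂μ, X ω ≤ M) (hηM : η < M) :
    μ.real {ω | X ω < η} ≤ (M - μ[X]) / (M - η) := by
  have hgap_nonneg : 0 ≤ᵐ[μ] fun ω => M - X ω := hXM.mono fun ω h => sub_nonneg.mpr h
  have hmarkov := mul_meas_ge_le_integral_of_nonneg hgap_nonneg
    ((integrable_const M).sub hX) (M - η)
  have hsub : {ω | X ω < η} ⊆ {ω | M - η ≤ M - X ω} :=
    fun ω (h : X ω < η) => show M - η ≤ M - X ω by linarith
  rw [integral_sub (integrable_const M) hX, integral_const, probReal_univ, one_smul] at hmarkov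
  rw [le_div_iff₀ (sub_pos.mpr hηM), mul_comm]
  exact (mul_le_mul_of_nonneg_left (measureReal_mono hsub) (sub_pos.mpr hηM).le).trans hmarkov

theorem skd_bhatia_davis_bound_general {Ω : Type*} [MeasureSpace Ω]
    [IsProbabilityMeasure (ℙ : Measure Ω)]
    (D : Ω → ℝ) (hmeas : Measurable D)
    (M δ η : ℝ) (hM : 0 < M) (hbdd : ∀ᵐ ω ∂ℙ, D ω ∈ Set.Icc 0 M)
    (hmean : ∫ ω, D ω ∂ℙ = δ) (hδM : δ < M)
    (hη : 0 < η) (hηδ : η < δ) :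
    (ℙ {ω | D ω < η}).toReal ≤ (M - δ + 2 * η) / M := by
  have hint : Integrable D ℙ := by
    refine Integrable.of_bound hmeas.aestronglyMeasurable M ?_
    filter_upwards [hbdd] with ω hω
    rw [Real.norm_eq_abs, abs_le]
    exact ⟨by linarith [hω.1], hω.2⟩
  have hηM : η < M := hηδ.trans hδM
  calc (ℙ {ω | D ω < η}).toReal
      ≤ (M - δ) / (M - η) := by
        rw [← measureReal_def, ← hmean]
        exact measureReal_lt_le_of_ae_le hint (hbdd.mono fun ω h => h.2) hηM
    _ ≤ (M - δ + 2 * η) / M := by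
        rw [div_le_div_iff₀ (sub_pos.mpr hηM) hM]
        nlinarith [mul_pos hη (by linarith : 0 < M + δ - 2 * η)]

/-- Theorem 1 combined with the Bhatia–Davis inequality: for a random
variable `D` with values in `[0, M]` and mean `δ ∈ (0, M)`, and `η ∈ (0, δ)`,
`P(D < η) ≤ (M - δ + 2η)/M`. -/
theorem skd_bhatia_davis_bound {Ω : Type*} [MeasureSpace Ω]
    [IsProbabilityMeasure (ℙ : Measure Ω)]
    (D : Ω → ℝ) (hmeas : Measurable D)
    (M δ η : ℝ) (hM : 0 < M) (hbdd : ∀ᵐ ω ∂ℙ, D ω ∈ Set.Icc 0 M)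
    (hmean : ∫ ω, D ω ∂ℙ = δ) (hδ0 : 0 < δ) (hδM : δ < M)
    (hη : 0 < η) (hηδ : η < δ) :
    (ℙ {ω | D ω < η}).toReal ≤ (M - δ + 2 * η) / M :=
  skd_bhatia_davis_bound_general D hmeas M δ η hM hbdd hmean hδM hη hηδ
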